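/- (Dicyclic groups.) Let q ≥ 1 be a natural number and put p = 4q. For natural numbers m, n with 0 ≤ m, n ≤ p−1, define ε(m) = ⌊m/(2q)⌋ ∈ {0, 1} and g_p(m, n) = d_{2q}(0, m + n·(−1)^{ε(m)} + q·ε(m)·ε(n)) + 2q · d_2(0, ε(m) + ε(n)), where the inner digit function is the integer-argument residue modulo 2q. Then g_p maps pairs from {0, …, p−1} into {0, …, p−1}, and there exists a bijection e : Fin (4q) ≃ QuaternionGroup q such that for all m, n in Fin (4q), e(g_p(m, n)) = e(m) * e(n); that is, {0, …, 4q−1} under g_p is a group isomorphic to the dicyclic group Q_{4q} of order 4q. -/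
import Mathlib


/-- The integer-argument digit function at position 0: the residue of `x` modulo `b`,
`d_b(0,x) = x - b⌊x/b⌋`. -/
def digitZ (b : ℕ) (x : ℤ) : ℤ := x - b * ⌊(x : ℚ) / (b : ℚ)⌋

/-- The most significant digit `ε(m) = ⌊m/(2q)⌋` of `m` in the mixed radix system `(2q, 2)`. -/
def eps (q m : ℕ) : ℕ := m / (2 * q)

/-- The law of composition inducing the dicyclic group structure on `{0, …, 4q-1}`. -/
def gdic (q m n : ℕ) : ℤ :=
  digitZ (2 * q) ((m : ℤ) + (n : ℤ) * (-1) ^ eps q m + q * eps q m * eps q n) +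
    2 * q * digitZ 2 (eps q m + eps q n)

lemma digitZ_eq (b : ℕ) (x : ℤ) : digitZ b x = x % b := by
  unfold digitZ
  rw [Rat.floor_intCast_div_natCast, Int.emod_def]

lemma gdic_eq (q m n : ℕ) :
    gdic q m n = ((m : ℤ) + (n : ℤ) * (-1) ^ eps q m + q * eps q m * eps q n) % (2 * q)
      + 2 * q * (((eps q m : ℤ) + eps q n) % 2) := by
  unfold gdic
  rw [digitZ_eq, digitZ_eq]
  push_cast
  ring_nf

lemma eps_lt (q : ℕ) (hq : 1 ≤ q) (m : ℕ) (hm : m < 4 * q) :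
    (m < 2 * q ∧ eps q m = 0) ∨ (2 * q ≤ m ∧ eps q m = 1) := by
  unfold eps
  rcases lt_or_ge m (2 * q) with h | h
  · exact Or.inl ⟨h, Nat.div_eq_of_lt h⟩
  · refine Or.inr ⟨h, ?_⟩
    have h1 : 1 ≤ m / (2 * q) := (Nat.one_le_div_iff (by omega)).2 h
    have h2 : m / (2 * q) < 2 := Nat.div_lt_of_lt_mul (by omega)
    omega


def fdic (q : ℕ) (m : Fin (4 * q)) : QuaternionGroup q :=
  if (m : ℕ) < 2 * q then QuaternionGroup.a ((m : ℕ) : ZMod (2 * q))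
  else QuaternionGroup.xa (-((m : ℕ) : ZMod (2 * q)))

def fdicInv (q : ℕ) (hq : 1 ≤ q) : QuaternionGroup q → Fin (4 * q)
  | .a i => ⟨i.val, by
      haveI : NeZero (2 * q) := ⟨by omega⟩
      have := ZMod.val_lt i; omega⟩
  | .xa i => ⟨2 * q + (-i).val, by
      haveI : NeZero (2 * q) := ⟨by omega⟩
      have := ZMod.val_lt (-i); omega⟩

theorem dicyclic_construction (q : ℕ) (hq : 1 ≤ q) :
    (∀ m n : Fin (4 * q), 0 ≤ gdic q m n ∧ gdic q m n < 4 * q) ∧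
    ∃ e : Fin (4 * q) ≃ QuaternionGroup q,
      ∀ m n k : Fin (4 * q), ((k : ℕ) : ℤ) = gdic q m n → e k = e m * e n := by
  have h2q : (0:ℤ) < 2 * q := by positivity
  have hbound : ∀ m n : Fin (4 * q), 0 ≤ gdic q m n ∧ gdic q m n < 4 * q := by
    intro m n
    rw [gdic_eq]
    have h1 := Int.emod_nonneg ((m : ℤ) + (n : ℤ) * (-1) ^ eps q m + q * eps q m * eps q n)
      (by omega : (2 * q : ℤ) ≠ 0)
    have h2 := Int.emod_lt_of_pos ((m : ℤ) + (n : ℤ) * (-1) ^ eps q m + q * eps q m * eps q n) h2q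
    have h3 := Int.emod_nonneg ((eps q m : ℤ) + eps q n) (by omega : (2:ℤ) ≠ 0)
    have h4 := Int.emod_lt_of_pos ((eps q m : ℤ) + eps q n) (by omega : (0:ℤ) < 2)
    constructor <;> nlinarith
  refine ⟨hbound, ?_⟩
  haveI : NeZero (2 * q) := ⟨by omega⟩
  refine ⟨⟨fdic q, fdicInv q hq, ?_, ?_⟩, ?_⟩
  · -- left inverse
    intro m
    unfold fdic fdicInv
    rcases lt_or_ge (m : ℕ) (2 * q) with h | h
    · simp only [h, if_pos]
      ext
      simp [ZMod.val_natCast, Nat.mod_eq_of_lt h]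
    · rw [if_neg (by omega)]
      ext
      simp only
      have : (-(-((m : ℕ) : ZMod (2 * q)))) = ((m : ℕ) : ZMod (2 * q)) := neg_neg _
      rw [this, ZMod.val_natCast]
      have hm := m.isLt
      have h5 : (m:ℕ) % (2*q) = (m:ℕ) - 2*q := by
        rw [Nat.mod_eq_sub_mod h, Nat.mod_eq_of_lt (by omega)]
      omega
  · -- right inverse
    intro x
    unfold fdic fdicInv
    match x with
    | .a i =>
      simp only
      rw [if_pos (ZMod.val_lt i)]
      congr 1
      rw [ZMod.natCast_val, ZMod.cast_id]
    | .xa i =>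
      simp only
      rw [if_neg (by omega)]
      congr 1
      have hv : ((2*q + (-i).val : ℕ) : ZMod (2*q)) = -i := by
        rw [Nat.cast_add, ZMod.natCast_self, ZMod.natCast_val, ZMod.cast_id, zero_add]
      rw [hv, neg_neg]
  · -- multiplicativity
    intro m n k hk
    simp only [Equiv.coe_fn_mk]
    unfold fdic
    have hcast : (2 * (q:ℤ)) = ((2*q : ℕ) : ℤ) := by push_cast; ring
    rw [gdic_eq] at hk
    set M := (m : ℕ) with hM
    set N := (n : ℕ) with hN
    have hm4 := m.isLt
    have hn4 := n.isLt
    -- helper to extract k info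
    rcases eps_lt q hq M hm4 with ⟨hMlt, hMe⟩ | ⟨hMge, hMe⟩ <;>
      rcases eps_lt q hq N hn4 with ⟨hNlt, hNe⟩ | ⟨hNge, hNe⟩ <;>
      rw [hMe, hNe] at hk <;>
      simp only [Nat.cast_zero, Nat.cast_one, pow_zero, pow_one, mul_zero, mul_one, zero_mul,
        mul_zero, add_zero, zero_add] at hk
    -- case 00
    · have hk2 : ((k:ℕ):ℤ) = ((M:ℤ) + N) % (2*q) := by
        rw [hk]; norm_num
      have hklt : (k : ℕ) < 2 * q := by
        have := Int.emod_lt_of_pos ((M:ℤ) + N) h2q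
        have := Int.emod_nonneg ((M:ℤ) + N) (by omega : (2*q:ℤ) ≠ 0)
        omega
      have hkc : (((k:ℕ) : ℤ) : ZMod (2*q)) = (((M:ℤ) + N) : ZMod (2*q)) := by
        rw [hk2, hcast, ZMod.intCast_mod]
        push_cast
        ring
      simp only [hklt, hMlt, hNlt, if_pos]
      rw [QuaternionGroup.a_mul_a]
      congr 1
      push_cast at hkc ⊢
      rw [hkc]
    · -- case 01
      have hk2 : ((k:ℕ):ℤ) = ((M:ℤ) + N) % (2*q) + ((2*q : ℕ) : ℤ) := by
        rw [hk]; push_cast; ring_nf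
      have hkge : ¬((k : ℕ) < 2 * q) := by
        have := Int.emod_nonneg ((M:ℤ) + N) (by omega : (2*q:ℤ) ≠ 0)
        have := hk2
        push_cast at this
        omega
      have hkc : (((k:ℕ) : ℤ) : ZMod (2*q)) = (((M:ℤ) + N) : ZMod (2*q)) := by
        rw [hk2, hcast, Int.cast_add, ZMod.intCast_mod, Int.cast_natCast,
          ZMod.natCast_self, add_zero]
        push_cast
        ring
      rw [if_neg hkge, if_pos hMlt, if_neg (by omega)]
      rw [QuaternionGroup.a_mul_xa]
      congr 1
      push_cast at hkc ⊢
      rw [hkc]; ring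
    · -- case 10
      have hk2 : ((k:ℕ):ℤ) = ((M:ℤ) - N) % (2*q) + ((2*q : ℕ) : ℤ) := by
        rw [hk]; push_cast; ring_nf
      have hkge : ¬((k : ℕ) < 2 * q) := by
        have := Int.emod_nonneg ((M:ℤ) - N) (by omega : (2*q:ℤ) ≠ 0)
        have := hk2
        push_cast at this
        omega
      have hkc : (((k:ℕ) : ℤ) : ZMod (2*q)) = (((M:ℤ) - N) : ZMod (2*q)) := by
        rw [hk2, hcast, Int.cast_add, ZMod.intCast_mod, Int.cast_natCast,
          ZMod.natCast_self, add_zero]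
        push_cast
        ring
      rw [if_neg hkge, if_neg (by omega), if_pos hNlt]
      rw [QuaternionGroup.xa_mul_a]
      congr 1
      push_cast at hkc ⊢
      rw [hkc]; ring
    · -- case 11
      have hk2 : ((k:ℕ):ℤ) = ((M:ℤ) - N + q) % (2*q) := by
        rw [hk]; push_cast; ring_nf
      have hklt : (k : ℕ) < 2 * q := by
        have := Int.emod_lt_of_pos ((M:ℤ) - N + q) h2q
        have := Int.emod_nonneg ((M:ℤ) - N + q) (by omega : (2*q:ℤ) ≠ 0)
        omega
      have hkc : (((k:ℕ) : ℤ) : ZMod (2*q)) = (((M:ℤ) - N + q) : ZMod (2*q)) := by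
        rw [hk2, hcast, ZMod.intCast_mod]
        push_cast
        ring
      rw [if_pos hklt, if_neg (by omega), if_neg (by omega)]
      rw [QuaternionGroup.xa_mul_xa]
      congr 1
      push_cast at hkc ⊢
      rw [hkc]; ring
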